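/- arXiv:0708.0374 — 3 statements merged into one kernel-verified Lean document; each statement's English description precedes it below -/
import Mathlib

section
/- Let f(x) = 2x mod 1 be the doubling map on [0,1], and define φ(0) = 0, φ(x) = -1/log(x) for x ∈ (0, 1/2), and φ(x) = 1/log 2 for x ∈ [1/2, 1]. Then φ is monotone increasing on [0,1) and bounded, its total variation equals 1/log 2, but for every n ≥ 1 the n-th variation over the dyadic partition satisfies V_n(φ) ≥ 1/(n log 2); in particular ∑_n V_n(φ) diverges. -/
/-!
On `(0, 1/2)` the potential is `-1/log x`, which increases from `0` to `1/log 2` and then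
stays constant, so its variation on `[0,1]` is just its increment `1/log 2`. But the first
dyadic cylinder `[0, 2^{-n})` contains both `0` and points arbitrarily close to `2^{-n}`,
where `φ` is close to `-1/log 2^{-n} = 1/(n log 2)`: the oscillation on that single cylinder
already dominates a harmonic series.
-/

open Set

/-- The potential of Example 1: `φ(0)=0`, `φ(x) = -1/log x` on `(0,1/2)`,
`φ(x) = 1/log 2` on `[1/2,1]`. -/
noncomputable def phiEx1 : ℝ → ℝ := fun x =>
  if x ≤ 0 then 0
  else if x < 1/2 then -1 / Real.log x
  else 1 / Real.log 2

/-- The `n`-th variation of `φ` over the dyadic partition into intervals of length `2^{-n}`. -/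
noncomputable def Vdyadic (φ : ℝ → ℝ) (n : ℕ) : ℝ :=
  sSup {d : ℝ | ∃ k : ℕ, k < 2 ^ n ∧
    ∃ x ∈ Ico ((k : ℝ) / 2 ^ n) (((k : ℝ) + 1) / 2 ^ n),
    ∃ y ∈ Ico ((k : ℝ) / 2 ^ n) (((k : ℝ) + 1) / 2 ^ n), d = |φ x - φ y|}

open Filter Topology

section Vdyadic

variable {φ : ℝ → ℝ} {M : ℝ}

lemma abs_sub_le_Vdyadic (hM : ∀ x y, |φ x - φ y| ≤ M) {n k : ℕ} (hk : k < 2 ^ n) {x y : ℝ}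
    (hx : x ∈ Ico ((k : ℝ) / 2 ^ n) (((k : ℝ) + 1) / 2 ^ n))
    (hy : y ∈ Ico ((k : ℝ) / 2 ^ n) (((k : ℝ) + 1) / 2 ^ n)) :
    |φ x - φ y| ≤ Vdyadic φ n :=
  le_csSup ⟨M, by rintro _ ⟨_, _, x, _, y, _, rfl⟩; exact hM x y⟩ ⟨k, hk, x, hx, y, hy, rfl⟩

lemma abs_sub_le_Vdyadic_of_mem_Ico_zero (hM : ∀ x y, |φ x - φ y| ≤ M) {n : ℕ} {x y : ℝ}
    (hx : x ∈ Ico 0 (1 / 2 ^ n)) (hy : y ∈ Ico 0 (1 / 2 ^ n)) :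
    |φ x - φ y| ≤ Vdyadic φ n :=
  abs_sub_le_Vdyadic hM (k := 0) (Nat.two_pow_pos n) (by simpa using hx) (by simpa using hy)

lemma Vdyadic_nonneg (hM : ∀ x y, |φ x - φ y| ≤ M) (n : ℕ) : 0 ≤ Vdyadic φ n := by
  have h0 : (0 : ℝ) ∈ Ico 0 (1 / 2 ^ n) := ⟨le_rfl, by positivity⟩
  simpa using abs_sub_le_Vdyadic_of_mem_Ico_zero hM h0 h0

end Vdyadic

lemma phiEx1_of_nonpos {x : ℝ} (hx : x ≤ 0) : phiEx1 x = 0 := if_pos hx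

lemma phiEx1_of_pos_of_lt_half {x : ℝ} (hx₀ : 0 < x) (hx : x < 1 / 2) :
    phiEx1 x = (-Real.log x)⁻¹ := by
  rw [phiEx1, if_neg hx₀.not_ge, if_pos hx, neg_div, ← div_neg, one_div]

lemma phiEx1_of_half_le {x : ℝ} (hx : 1 / 2 ≤ x) : phiEx1 x = (Real.log 2)⁻¹ := by
  rw [phiEx1, if_neg (by linarith), if_neg hx.not_gt, one_div]

lemma neg_log_pos_of_lt_half {x : ℝ} (hx₀ : 0 < x) (hx : x < 1 / 2) : 0 < -Real.log x :=
  neg_pos.2 (Real.log_neg hx₀ (by linarith))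

lemma inv_log_two_pos : 0 < (Real.log 2)⁻¹ := inv_pos.2 (Real.log_pos one_lt_two)

lemma phiEx1_nonneg (x : ℝ) : 0 ≤ phiEx1 x := by
  rcases le_or_gt x 0 with hx₀ | hx₀
  · exact (phiEx1_of_nonpos hx₀).ge
  rcases lt_or_ge x (1 / 2) with hx | hx
  · rw [phiEx1_of_pos_of_lt_half hx₀ hx]
    exact (inv_pos.2 (neg_log_pos_of_lt_half hx₀ hx)).le
  · exact (phiEx1_of_half_le hx).symm ▸ inv_log_two_pos.le

lemma phiEx1_le (x : ℝ) : phiEx1 x ≤ (Real.log 2)⁻¹ := by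
  rcases le_or_gt x 0 with hx₀ | hx₀
  · exact (phiEx1_of_nonpos hx₀).symm ▸ inv_log_two_pos.le
  rcases lt_or_ge x (1 / 2) with hx | hx
  · rw [phiEx1_of_pos_of_lt_half hx₀ hx]
    refine inv_anti₀ (Real.log_pos one_lt_two) ?_
    have : Real.log x ≤ Real.log (1 / 2) := Real.log_le_log hx₀ hx.le
    rw [one_div, Real.log_inv] at this
    linarith
  · exact (phiEx1_of_half_le hx).le

lemma abs_phiEx1_sub_le (x y : ℝ) : |phiEx1 x - phiEx1 y| ≤ (Real.log 2)⁻¹ :=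
  abs_sub_le_iff.2 ⟨by linarith [phiEx1_le x, phiEx1_nonneg y],
    by linarith [phiEx1_le y, phiEx1_nonneg x]⟩

lemma phiEx1_monotone : Monotone phiEx1 := by
  intro x y hxy
  rcases le_or_gt x 0 with hx₀ | hx₀
  · exact (phiEx1_of_nonpos hx₀).symm ▸ phiEx1_nonneg y
  rcases lt_or_ge y (1 / 2) with hy | hy
  · have hy₀ : 0 < y := hx₀.trans_le hxy
    rw [phiEx1_of_pos_of_lt_half hx₀ (hxy.trans_lt hy), phiEx1_of_pos_of_lt_half hy₀ hy]
    exact inv_anti₀ (neg_log_pos_of_lt_half hy₀ hy) (neg_le_neg (Real.log_le_log hx₀ hxy))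
  · exact (phiEx1_of_half_le hy).symm ▸ phiEx1_le x

lemma eVariationOn_phiEx1 :
    eVariationOn phiEx1 (Icc 0 1) = ENNReal.ofReal (1 / Real.log 2) := by
  have h := (phiEx1_monotone.monotoneOn univ).eVariationOn_eq (mem_univ (0 : ℝ)) (mem_univ 1)
  rwa [univ_inter, phiEx1_of_half_le (by norm_num), phiEx1_of_nonpos le_rfl, sub_zero,
    ← one_div] at h

lemma phiEx1_le_Vdyadic {n : ℕ} {y : ℝ} (hy : y ∈ Ico 0 (1 / 2 ^ n)) :
    phiEx1 y ≤ Vdyadic phiEx1 n := by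
  have h0 : (0 : ℝ) ∈ Ico 0 (1 / 2 ^ n) := ⟨le_rfl, by positivity⟩
  have h := abs_sub_le_Vdyadic_of_mem_Ico_zero abs_phiEx1_sub_le hy h0
  rwa [phiEx1_of_nonpos le_rfl, sub_zero, abs_of_nonneg (phiEx1_nonneg y)] at h

lemma one_div_mul_log_two_le_Vdyadic {n : ℕ} (hn : 1 ≤ n) :
    1 / (n * Real.log 2) ≤ Vdyadic phiEx1 n := by
  set a : ℝ := 1 / 2 ^ n
  have ha₀ : 0 < a := by positivity
  have ha : a ≤ 1 / 2 :=
    one_div_le_one_div_of_le two_pos (by simpa using pow_le_pow_right₀ one_le_two hn)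
  have hlog_a : -Real.log a = n * Real.log 2 := by simp [a, Real.log_pow]
  have hlog_a_ne : -Real.log a ≠ 0 := by
    rw [hlog_a]
    exact mul_ne_zero (by positivity) (Real.log_pos one_lt_two).ne'
  have hlim : Tendsto phiEx1 (𝓝[<] a) (𝓝 (-Real.log a)⁻¹) := by
    have hcont : ContinuousAt (fun y ↦ (-Real.log y)⁻¹) a :=
      (Real.continuousAt_log ha₀.ne').neg.inv₀ hlog_a_ne
    refine (hcont.tendsto.mono_left nhdsWithin_le_nhds).congr' ?_
    filter_upwards [Ioo_mem_nhdsLT ha₀] with y hy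
    exact (phiEx1_of_pos_of_lt_half hy.1 (hy.2.trans_le ha)).symm
  have hle : ∀ᶠ y in 𝓝[<] a, phiEx1 y ≤ Vdyadic phiEx1 n := by
    filter_upwards [Ioo_mem_nhdsLT ha₀] with y hy using phiEx1_le_Vdyadic ⟨hy.1.le, hy.2⟩
  rw [one_div, ← hlog_a]
  exact le_of_tendsto hlim hle

lemma not_summable_one_div_mul_log_two :
    ¬ Summable (fun n : ℕ ↦ 1 / (n * Real.log 2)) := by
  simpa [mul_inv, summable_mul_left_iff, Real.log_pos one_lt_two |>.ne']
    using Real.not_summable_natCast_inv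

/-- For the doubling map, the potential `φ` of Example 1 is increasing and bounded on
`[0,1)`, has total variation `1/log 2`, but its `n`-th variations over the dyadic
partition satisfy `V_n(φ) ≥ 1/(n log 2)`, so `∑ V_n(φ)` diverges. -/
theorem stmt0 :
    MonotoneOn phiEx1 (Ico (0 : ℝ) 1) ∧
    (∃ M : ℝ, ∀ x ∈ Icc (0 : ℝ) 1, |phiEx1 x| ≤ M) ∧
    eVariationOn phiEx1 (Icc (0 : ℝ) 1) = ENNReal.ofReal (1 / Real.log 2) ∧
    (∀ n : ℕ, 1 ≤ n → 1 / (n * Real.log 2) ≤ Vdyadic phiEx1 n) ∧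
    ¬ Summable (Vdyadic phiEx1) := by
  refine ⟨phiEx1_monotone.monotoneOn _, ⟨(Real.log 2)⁻¹, fun x _ ↦ ?_⟩, eVariationOn_phiEx1,
    fun n ↦ one_div_mul_log_two_le_Vdyadic, fun hsum ↦ not_summable_one_div_mul_log_two ?_⟩
  · simpa [abs_of_nonneg (phiEx1_nonneg x)] using phiEx1_le x
  · refine hsum.of_nonneg_of_le (fun n ↦ by positivity) fun n ↦ ?_
    rcases Nat.eq_zero_or_pos n with rfl | hn
    · simpa using Vdyadic_nonneg abs_phiEx1_sub_le 0
    · exact one_div_mul_log_two_le_Vdyadic hn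
end

section
/- Let W = (w_{i,j}) be an n×n nonnegative matrix with leading eigenvalue ρ and positive left eigenvector v = (v_1, …, v_n). Construct W̃ by splitting vertex 1 into m copies as follows: if the nonzero entries of row 1 are in columns b_1, …, b_m, then W̃ has m rows replacing row 1, the j-th new row having its single nonzero entry w_{1,b_j} in column b_j (with columns indexed after splitting), and every column-1 entry w_{c,1} replaced by m identical entries w_{c,1} in the m new columns. Then ρ is the leading eigenvalue of W̃ and (v_1, …, v_1, v_2, …, v_n) (with v_1 repeated m times) is a corresponding positive left eigenvector. -/
/-!
Let `T` be the 0/1 matrix sending each copy of vertex `0` back to `0`, and `S` the matrix `W`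
with row `0` split into the `m + 1` rows `W 0 (b l) • e_{b l}`. Since these rows sum to row `0`,
`W = T * S`, while `W̃ = S * T`. Hence `v ↦ v * T` carries left eigenvectors of `W` to left
eigenvectors of `W̃` (and `v * T` is `v` with `v 0` repeated), and `W`, `W̃` have the same nonzero
eigenvalues. Left and right eigenvalues agree (same characteristic polynomial), so `ρ` is an
eigenvalue of both matrices; then `|ρ| ≤ ρ` gives `ρ ≥ 0`, which bounds the eigenvalue `0`.
-/

open Matrix

theorem Function.Injective.sum_ite_eq_of_support_subset_range {κ ι M : Type*} [Fintype κ]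
    [DecidableEq ι] [AddCommMonoid M] {b : κ → ι} (hb : Function.Injective b) {f : ι → M}
    (hf : Function.support f ⊆ Set.range b) (j : ι) :
    ∑ l, (if b l = j then f j else 0) = f j := by
  by_cases hj : j ∈ Set.range b
  · classical
    obtain ⟨l, rfl⟩ := hj
    simp [hb.eq_iff]
  · have hfj : f j = 0 := Function.notMem_support.1 (mt (@hf j) hj)
    simp [hfj]

namespace Matrix

variable {ι κ : Type*} [Fintype ι] [Fintype κ]

theorem hasEigenvalue_mulVecLin_iff {R : Type*} [CommRing R] {A : Matrix ι ι R} {μ : R} :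
    Module.End.HasEigenvalue (mulVecLin A) μ ↔ ∃ x ≠ 0, A *ᵥ x = μ • x := by
  constructor
  · intro h
    obtain ⟨x, hx, hx0⟩ := h.exists_hasEigenvector
    exact ⟨x, hx0, Module.End.mem_eigenspace_iff.1 hx⟩
  · rintro ⟨x, hx0, hx⟩
    exact Module.End.hasEigenvalue_of_hasEigenvector ⟨Module.End.mem_eigenspace_iff.2 hx, hx0⟩

theorem hasEigenvalue_mulVecLin_transpose_iff {R : Type*} [CommRing R] [IsDomain R]
    [DecidableEq ι] {A : Matrix ι ι R} {μ : R} :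
    Module.End.HasEigenvalue (mulVecLin Aᵀ) μ ↔ Module.End.HasEigenvalue (mulVecLin A) μ := by
  simp only [Module.End.hasEigenvalue_iff_isRoot_charpoly, charpoly_mulVecLin, charpoly_transpose]

theorem hasEigenvalue_mulVecLin_of_vecMul_eq_smul {R : Type*} [CommRing R] [IsDomain R]
    [DecidableEq ι] {A : Matrix ι ι R} {v : ι → R} {μ : R} (hv : v ≠ 0) (h : v ᵥ* A = μ • v) :
    Module.End.HasEigenvalue (mulVecLin A) μ :=
  hasEigenvalue_mulVecLin_transpose_iff.1 <|
    hasEigenvalue_mulVecLin_iff.2 ⟨v, hv, by rw [mulVec_transpose, h]⟩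

theorem vecMul_mul_comm_eq_smul {R : Type*} [CommSemiring R] {A : Matrix ι κ R}
    {B : Matrix κ ι R} {v : ι → R} {μ : R} (h : v ᵥ* (A * B) = μ • v) :
    (v ᵥ* A) ᵥ* (B * A) = μ • (v ᵥ* A) := by
  rw [vecMul_vecMul, ← Matrix.mul_assoc, ← vecMul_vecMul, h, smul_vecMul]

theorem hasEigenvalue_mulVecLin_mul_comm {R : Type*} [CommRing R] [IsDomain R]
    {A : Matrix ι κ R} {B : Matrix κ ι R} {μ : R} (hμ : μ ≠ 0) (h : Module.End.HasEigenvalue (mulVecLin (A * B)) μ) :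
    Module.End.HasEigenvalue (mulVecLin (B * A)) μ := by
  obtain ⟨x, hx0, hx⟩ := hasEigenvalue_mulVecLin_iff.1 h
  rw [← mulVec_mulVec] at hx
  refine hasEigenvalue_mulVecLin_iff.2 ⟨B *ᵥ x, fun hBx => ?_, ?_⟩
  · rw [hBx, mulVec_zero, eq_comm, smul_eq_zero] at hx
    exact hx.elim hμ hx0
  · rw [← mulVec_mulVec, hx, mulVec_smul]

end Matrix

abbrev SplitIndex (m n : ℕ) := Fin (m + 1) ⊕ {j : Fin (n + 1) // j ≠ 0}

def SplitIndex.merge {m n : ℕ} : SplitIndex m n → Fin (n + 1) := Sum.elim (fun _ => 0) Subtype.val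

namespace Matrix

variable {R : Type*} [Semiring R] {n m : ℕ}

def splitRowZero (W : Matrix (Fin (n + 1)) (Fin (n + 1)) R) (b : Fin (m + 1) → Fin (n + 1)) :
    Matrix (SplitIndex m n) (Fin (n + 1)) R :=
  of fun p i => Sum.elim (fun l => if b l = i then W 0 i else 0) (fun j => W j.1 i) p

/-- `R` is explicit: otherwise products with `mergeCols` can pick up the `CStarMatrix` instance. -/
def mergeCols (R : Type*) [Semiring R] (m n : ℕ) : Matrix (Fin (n + 1)) (SplitIndex m n) R :=
  (1 : Matrix (Fin (n + 1)) (Fin (n + 1)) R).submatrix id SplitIndex.merge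

theorem mergeCols_mul_splitRowZero {W : Matrix (Fin (n + 1)) (Fin (n + 1)) R}
    {b : Fin (m + 1) → Fin (n + 1)} (hb : Function.Injective b)
    (hrow : Function.support (W 0) ⊆ Set.range b) :
    mergeCols R m n * splitRowZero W b = W := by
  ext i j
  rw [mul_apply, Fintype.sum_sum_type]
  simp only [mergeCols, splitRowZero, SplitIndex.merge, submatrix_apply, one_apply, of_apply,
    Sum.elim_inl, Sum.elim_inr, id]
  rcases eq_or_ne i 0 with rfl | hi
  · simp [fun a : {j : Fin (n + 1) // j ≠ 0} => a.2.symm, hb.sum_ite_eq_of_support_subset_range hrow]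
  · have hsub (a : {j : Fin (n + 1) // j ≠ 0}) : i = a ↔ ⟨i, hi⟩ = a :=
      (Subtype.ext_iff (a1 := ⟨i, hi⟩)).symm
    simp [hi, hsub]

theorem splitRowZero_mul_mergeCols (W : Matrix (Fin (n + 1)) (Fin (n + 1)) R)
    (b : Fin (m + 1) → Fin (n + 1)) :
    splitRowZero W b * mergeCols R m n = (splitRowZero W b).submatrix id SplitIndex.merge :=
  mul_submatrix_one (Equiv.refl _) SplitIndex.merge _

theorem vecMul_mergeCols (v : Fin (n + 1) → R) :
    v ᵥ* mergeCols R m n = v ∘ SplitIndex.merge := by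
  simpa [mergeCols] using
    submatrix_vecMul_equiv (1 : Matrix _ _ R) v (Equiv.refl _) (SplitIndex.merge (m := m) (n := n))

end Matrix

theorem stmt6_general (n m : ℕ) (W : Matrix (Fin (n + 1)) (Fin (n + 1)) ℝ)
    (ρ : ℝ) (v : Fin (n + 1) → ℝ) (b : Fin (m + 1) → Fin (n + 1))
    (hb : Function.Injective b)
    (hrow : ∀ j, W 0 j ≠ 0 ↔ ∃ l, b l = j)
    (hv : ∀ i, 0 < v i)
    (heig : v ᵥ* W = ρ • v)
    (hlead : ∀ μ : ℝ, Module.End.HasEigenvalue (Matrix.mulVecLin W) μ → |μ| ≤ ρ) :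
    ∀ Wt : Matrix (Fin (m + 1) ⊕ {j : Fin (n + 1) // j ≠ 0})
             (Fin (m + 1) ⊕ {j : Fin (n + 1) // j ≠ 0}) ℝ,
    ∀ vt : (Fin (m + 1) ⊕ {j : Fin (n + 1) // j ≠ 0}) → ℝ,
    (∀ l l', Wt (Sum.inl l) (Sum.inl l') = if b l = 0 then W 0 0 else 0) →
    (∀ l j, Wt (Sum.inl l) (Sum.inr j) = if b l = j.1 then W 0 j.1 else 0) →
    (∀ j l', Wt (Sum.inr j) (Sum.inl l') = W j.1 0) →
    (∀ j j', Wt (Sum.inr j) (Sum.inr j') = W j.1 j'.1) →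
    (∀ l, vt (Sum.inl l) = v 0) → (∀ j, vt (Sum.inr j) = v j.1) →
    (∀ p, 0 < vt p) ∧
    vt ᵥ* Wt = ρ • vt ∧
    Module.End.HasEigenvalue (Matrix.mulVecLin Wt) ρ ∧
    (∀ μ : ℝ, Module.End.HasEigenvalue (Matrix.mulVecLin Wt) μ → |μ| ≤ ρ) := by
  intro Wt vt hWt₁₁ hWt₁₂ hWt₂₁ hWt₂₂ hvt₁ hvt₂
  have hW : mergeCols ℝ m n * splitRowZero W b = W :=
    mergeCols_mul_splitRowZero hb fun j hj => (hrow j).1 hj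
  have hWt : Wt = splitRowZero W b * mergeCols ℝ m n := by
    rw [splitRowZero_mul_mergeCols]
    ext (l | j) (l' | j') <;> simp [splitRowZero, SplitIndex.merge, *]
  have hvt : vt = v ᵥ* mergeCols ℝ m n := by
    rw [vecMul_mergeCols]
    ext (l | j) <;> simp [SplitIndex.merge, *]
  have hvt_pos : ∀ p, 0 < vt p := by
    rintro (l | j) <;> simp [hv, hvt₁, hvt₂]
  have hvt_eig : vt ᵥ* Wt = ρ • vt := by
    rw [hvt, hWt]
    exact vecMul_mul_comm_eq_smul (by rwa [hW])
  have hρ : 0 ≤ ρ := (abs_nonneg ρ).trans <| hlead ρ <|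
    hasEigenvalue_mulVecLin_of_vecMul_eq_smul (fun h => (hv 0).ne' (congrFun h 0)) heig
  refine ⟨hvt_pos, hvt_eig, hasEigenvalue_mulVecLin_of_vecMul_eq_smul
    (fun h => (hvt_pos (.inl 0)).ne' (congrFun h _)) hvt_eig, fun μ hμ => ?_⟩
  rcases eq_or_ne μ 0 with rfl | hμ0
  · simpa using hρ
  · rw [hWt] at hμ
    exact hlead μ (hW ▸ hasEigenvalue_mulVecLin_mul_comm hμ0 hμ)

/-- Vertex-splitting lemma. `W` is a nonnegative `(n+1)×(n+1)` matrix with leading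
eigenvalue `ρ` (every real eigenvalue `μ` satisfies `|μ| ≤ ρ`) and positive left
eigenvector `v`. The nonzero entries of row `0` sit exactly in the columns
`b 0, …, b m` (the outgoing arrows of vertex `0`). Splitting vertex `0` into
`m+1` copies, the `l`-th new row having its single nonzero entry `W 0 (b l)` in
(the copies of) column `b l`, and each column-`0` entry `W c 0` duplicated into
all the new columns, produces `W̃`. Then `ρ` is again the leading eigenvalue of
`W̃`, with positive left eigenvector `(v 0, …, v 0, v 1, …, v n)`. -/
theorem stmt6 (n m : ℕ) (W : Matrix (Fin (n + 1)) (Fin (n + 1)) ℝ)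
    (ρ : ℝ) (v : Fin (n + 1) → ℝ) (b : Fin (m + 1) → Fin (n + 1))
    (hW : ∀ i j, 0 ≤ W i j)
    (hb : Function.Injective b)
    (hrow : ∀ j, W 0 j ≠ 0 ↔ ∃ l, b l = j)
    (hv : ∀ i, 0 < v i)
    (heig : v ᵥ* W = ρ • v)
    (heigval : Module.End.HasEigenvalue (Matrix.mulVecLin W) ρ)
    (hlead : ∀ μ : ℝ, Module.End.HasEigenvalue (Matrix.mulVecLin W) μ → |μ| ≤ ρ) :
    ∀ Wt : Matrix (Fin (m + 1) ⊕ {j : Fin (n + 1) // j ≠ 0})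
             (Fin (m + 1) ⊕ {j : Fin (n + 1) // j ≠ 0}) ℝ,
    ∀ vt : (Fin (m + 1) ⊕ {j : Fin (n + 1) // j ≠ 0}) → ℝ,
    (∀ l l', Wt (Sum.inl l) (Sum.inl l') = if b l = 0 then W 0 0 else 0) →
    (∀ l j, Wt (Sum.inl l) (Sum.inr j) = if b l = j.1 then W 0 j.1 else 0) →
    (∀ j l', Wt (Sum.inr j) (Sum.inl l') = W j.1 0) →
    (∀ j j', Wt (Sum.inr j) (Sum.inr j') = W j.1 j'.1) →
    (∀ l, vt (Sum.inl l) = v 0) → (∀ j, vt (Sum.inr j) = v j.1) →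
    (∀ p, 0 < vt p) ∧
    vt ᵥ* Wt = ρ • vt ∧
    Module.End.HasEigenvalue (Matrix.mulVecLin Wt) ρ ∧
    (∀ μ : ℝ, Module.End.HasEigenvalue (Matrix.mulVecLin Wt) μ → |μ| ≤ ρ) :=
  stmt6_general n m W ρ v b hb hrow hv heig hlead
end

section
/- Let f ∈ H with inducing scheme (X, F, τ) satisfying: there exist C, η > 0 with e^{-n h_top(f)} #{i : τ_i = n} ≤ C e^{-ηn}, and |X_i| ≥ |X| e^{-γ τ_i} for γ = log sup|Df|. Then for t < 0 with tγ + η > 0, the series Z_0(-τ h_top(f) - t log|DF|) ≍ |X|^{-t} ∑_n e^{-n h_top(f)} ∑_{τ_i = n} |X_i|^t is finite; and for 0 < t < 1, using Hölder's inequality and #{τ_i = n} ≤ C_ε e^{n(h_top(f)+ε)} and ∑_{τ_i = n}|X_i| ≤ 1, the same series is finite whenever ε < (t/(1-t)) h_top(f). -/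
set_option maxHeartbeats 1000000

private lemma geom_sum_aux (K c : ℝ) (hc : 0 < c) :
    Summable (fun n : ℕ => K * Real.exp (-c * n)) := by
  have h : ∀ n : ℕ, K * Real.exp (-c * n) = K * (Real.exp (-c)) ^ n := by
    intro n
    rw [← Real.exp_nat_mul]
    ring_nf
  simp_rw [h]
  exact (summable_geometric_of_lt_one (Real.exp_pos _).le
    (Real.exp_lt_one_iff.2 (by linarith))).mul_left K

/-- Finiteness of `Z₀(-τ h_top(f) - t log|DF|)` for `t` near `0`, for a
full-branch induced map `F = f^τ` with branches `X i` of lengths `ℓ i`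
(`|DF| ≍ 1/ℓ` up to bounded distortion, so the terms of `Z₀` are comparable to
`e^{-τ_i h_top(f)} ℓ_i^t`). Hypotheses: `e^{-n h_top} #{τ_i = n} ≤ C e^{-ηn}`;
`ℓ i ≥ |X| e^{-γ τ_i}` with `γ = log sup|Df|`; `#{τ_i = n} ≤ C_ε e^{n(h_top+ε)}`
for every `ε > 0`; and `∑_{τ_i = n} ℓ_i ≤ 1`. Conclusion: the series
`∑_i e^{-τ_i h_top} ℓ_i^t` converges for `t < 0` with `tγ + η > 0`, and for
every `0 < t < 1` (via Hölder's inequality, using any `ε < (t/(1-t)) h_top`). -/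
theorem stmt19 (τ : ℕ → ℕ) (ℓ : ℕ → ℝ) (LX htop γ Cc η : ℝ)
    (hLX : 0 < LX) (hhtop : 0 < htop) (hγ : 0 < γ) (hCc : 0 < Cc) (hη : 0 < η)
    (hℓpos : ∀ i, 0 < ℓ i)
    (hℓlow : ∀ i, LX * Real.exp (-γ * τ i) ≤ ℓ i)
    (hfin : ∀ n : ℕ, {i : ℕ | τ i = n}.Finite)
    (hcount : ∀ n : ℕ, (Nat.card {i : ℕ // τ i = n} : ℝ)
      * Real.exp (-(n : ℝ) * htop) ≤ Cc * Real.exp (-η * n))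
    (hcounteps : ∀ ε : ℝ, 0 < ε → ∃ Cε : ℝ, 0 < Cε ∧
      ∀ n : ℕ, (Nat.card {i : ℕ // τ i = n} : ℝ)
        ≤ Cε * Real.exp ((n : ℝ) * (htop + ε)))
    (hsumlen : ∀ n : ℕ, ∑' i : {i : ℕ // τ i = n}, ℓ i.1 ≤ 1) :
    (∀ t : ℝ, t < 0 → 0 < t * γ + η →
      Summable (fun i : ℕ => Real.exp (-(τ i : ℝ) * htop) * ℓ i ^ t)) ∧
    (∀ t : ℝ, 0 < t → t < 1 →
      Summable (fun i : ℕ => Real.exp (-(τ i : ℝ) * htop) * ℓ i ^ t)) := by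
  haveI finfib : ∀ n : ℕ, Fintype {i : ℕ // τ i = n} := fun n => (hfin n).fintype
  have hg : ∀ t : ℝ, ∀ i : ℕ, 0 ≤ Real.exp (-(τ i : ℝ) * htop) * ℓ i ^ t :=
    fun t i => mul_nonneg (Real.exp_pos _).le (Real.rpow_nonneg (hℓpos i).le t)
  -- reduction to fiberwise sums
  have red : ∀ t : ℝ,
      Summable (fun n : ℕ => ∑ i : {i : ℕ // τ i = n},
        Real.exp (-(τ i.1 : ℝ) * htop) * ℓ i.1 ^ t) →
      Summable (fun i : ℕ => Real.exp (-(τ i : ℝ) * htop) * ℓ i ^ t) := by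
    intro t hsum
    have hs : Summable (fun p : ((n : ℕ) × {i : ℕ // τ i = n}) =>
        Real.exp (-(τ p.2.1 : ℝ) * htop) * ℓ p.2.1 ^ t) := by
      refine (summable_sigma_of_nonneg
        (fun p : ((n : ℕ) × {i : ℕ // τ i = n}) => hg t p.2.1)).2
        ⟨fun n => Summable.of_finite, ?_⟩
      convert hsum using 2 with n
      exact tsum_fintype _
    exact (Equiv.sigmaFiberEquiv τ).summable_iff.mp hs
  constructor
  · -- t < 0
    intro t ht htγ
    apply red t
    apply Summable.of_nonneg_of_le
      (fun n => Finset.sum_nonneg fun i _ => hg t i.1)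
      (fun n => ?_) (geom_sum_aux (Cc * LX ^ t) (t * γ + η) htγ)
    -- bound the fiber sum
    have hbound : ∀ i : {i : ℕ // τ i = n},
        Real.exp (-(τ i.1 : ℝ) * htop) * ℓ i.1 ^ t ≤
          Real.exp (-(n : ℝ) * htop) * (LX ^ t * Real.exp (-γ * n * t)) := by
      intro i
      have hτ : (τ i.1 : ℝ) = (n : ℝ) := by exact_mod_cast congrArg Nat.cast i.2
      rw [hτ]
      refine mul_le_mul_of_nonneg_left ?_ (Real.exp_pos _).le
      have h1 : ℓ i.1 ^ t ≤ (LX * Real.exp (-γ * n)) ^ t := by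
        have := hℓlow i.1
        rw [hτ] at this
        exact Real.rpow_le_rpow_of_nonpos
          (mul_pos hLX (Real.exp_pos _)) this ht.le
      calc ℓ i.1 ^ t ≤ (LX * Real.exp (-γ * n)) ^ t := h1
        _ = LX ^ t * Real.exp (-γ * n * t) := by
            rw [Real.mul_rpow hLX.le (Real.exp_pos _).le, ← Real.exp_mul]
    calc ∑ i : {i : ℕ // τ i = n}, Real.exp (-(τ i.1 : ℝ) * htop) * ℓ i.1 ^ t
        ≤ ∑ _i : {i : ℕ // τ i = n},
            Real.exp (-(n : ℝ) * htop) * (LX ^ t * Real.exp (-γ * n * t)) :=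
          Finset.sum_le_sum fun i _ => hbound i
      _ = (Nat.card {i : ℕ // τ i = n} : ℝ) * Real.exp (-(n : ℝ) * htop)
            * (LX ^ t * Real.exp (-γ * n * t)) := by
          rw [Finset.sum_const, Nat.card_eq_fintype_card]
          simp [mul_assoc]
      _ ≤ Cc * Real.exp (-η * n) * (LX ^ t * Real.exp (-γ * n * t)) := by
          refine mul_le_mul_of_nonneg_right (hcount n) ?_
          positivity
      _ = Cc * LX ^ t * Real.exp (-(t * γ + η) * n) := by
          have h : -(t * γ + η) * (n : ℝ) = -η * n + -γ * n * t := by ring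
          rw [h, Real.exp_add]
          ring
  · -- 0 < t < 1
    intro t ht ht1
    set a : ℝ := htop / (2 * (1 - t)) with ha_def
    have h1t : 0 < 1 - t := by linarith
    have ha : 0 < a := by positivity
    set ε : ℝ := t * a / 2 with hε_def
    have hε : 0 < ε := by positivity
    obtain ⟨Cε, hCε, hCεn⟩ := hcounteps ε hε
    apply red t
    -- pointwise concavity bound : x^t ≤ A^t + A^(t-1) x
    have hpt : ∀ (x A : ℝ), 0 < x → 0 < A → x ^ t ≤ A ^ t + A ^ (t - 1) * x := by
      intro x A hx hA
      rcases le_total x A with h | h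
      · have : x ^ t ≤ A ^ t := Real.rpow_le_rpow hx.le h ht.le
        nlinarith [Real.rpow_pos_of_pos hA (t - 1), hx]
      · have h2 : x ^ (t - 1) ≤ A ^ (t - 1) :=
          Real.rpow_le_rpow_of_nonpos hA h (by linarith)
        have h3 := Real.rpow_add hx (t - 1) 1
        rw [Real.rpow_one, sub_add_cancel] at h3
        rw [h3]
        have : x ^ (t - 1) * x ≤ A ^ (t - 1) * x :=
          mul_le_mul_of_nonneg_right h2 hx.le
        nlinarith [Real.rpow_pos_of_pos hA t]
    -- fiber sum bound
    apply Summable.of_nonneg_of_le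
      (fun n => Finset.sum_nonneg fun i _ => hg t i.1)
      (fun n => ?_)
      (((geom_sum_aux Cε (t * a / 2) (by positivity)).add
        (geom_sum_aux 1 (htop / 2) (by positivity))))
    have hAn : (0:ℝ) < Real.exp (-a * n) := Real.exp_pos _
    have step1 : ∀ i : {i : ℕ // τ i = n},
        Real.exp (-(τ i.1 : ℝ) * htop) * ℓ i.1 ^ t ≤
          Real.exp (-(n : ℝ) * htop) *
            (Real.exp (-a * n) ^ t + Real.exp (-a * n) ^ (t - 1) * ℓ i.1) := by
      intro i
      have hτ : (τ i.1 : ℝ) = (n : ℝ) := by exact_mod_cast congrArg Nat.cast i.2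
      rw [hτ]
      exact mul_le_mul_of_nonneg_left (hpt (ℓ i.1) _ (hℓpos i.1) hAn)
        (Real.exp_pos _).le
    have hsumℓ : ∑ i : {i : ℕ // τ i = n}, ℓ i.1 ≤ 1 := by
      have := hsumlen n
      rwa [tsum_fintype] at this
    calc ∑ i : {i : ℕ // τ i = n}, Real.exp (-(τ i.1 : ℝ) * htop) * ℓ i.1 ^ t
        ≤ ∑ i : {i : ℕ // τ i = n}, Real.exp (-(n : ℝ) * htop) *
            (Real.exp (-a * n) ^ t + Real.exp (-a * n) ^ (t - 1) * ℓ i.1) :=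
          Finset.sum_le_sum fun i _ => step1 i
      _ = Real.exp (-(n : ℝ) * htop) *
            ((Nat.card {i : ℕ // τ i = n} : ℝ) * Real.exp (-a * n) ^ t
              + Real.exp (-a * n) ^ (t - 1) * ∑ i : {i : ℕ // τ i = n}, ℓ i.1) := by
          rw [← Finset.mul_sum, Finset.sum_add_distrib, Finset.sum_const,
            ← Finset.mul_sum, Nat.card_eq_fintype_card]
          simp [mul_comm]
      _ ≤ Real.exp (-(n : ℝ) * htop) *
            (Cε * Real.exp ((n : ℝ) * (htop + ε)) * Real.exp (-a * n) ^ t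
              + Real.exp (-a * n) ^ (t - 1) * 1) := by
          refine mul_le_mul_of_nonneg_left (add_le_add ?_ ?_) (Real.exp_pos _).le
          · exact mul_le_mul_of_nonneg_right (hCεn n)
              (Real.rpow_nonneg hAn.le t)
          · exact mul_le_mul_of_nonneg_left hsumℓ
              (Real.rpow_nonneg hAn.le (t - 1))
      _ = Cε * Real.exp (-(t * a / 2) * n) + 1 * Real.exp (-(htop / 2) * n) := by
          rw [← Real.exp_mul, ← Real.exp_mul]
          have h1 : -(t * a / 2) * (n : ℝ)
              = -(n : ℝ) * htop + ((n : ℝ) * (htop + ε) + -a * n * t) := by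
            rw [hε_def]; ring
          have h2 : -(htop / 2) * (n : ℝ)
              = -(n : ℝ) * htop + -a * n * (t - 1) := by
            rw [ha_def]; field_simp; ring
          rw [h1, h2, Real.exp_add, Real.exp_add, Real.exp_add]
          ring
end
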